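/- Let R ∈ (0, 1/2) and γ ∈ [0,1) with γ ≥ 2R, and for each integer n ≥ 1 let Yₙ be the unique real number satisfying γ·Φ(Yₙ) + (1−γ)·Φ(√n·Yₙ) = R. Then Φ(Yₙ) → R/γ and Φ(√n·Yₙ) → 0 as n → ∞. -/

import Mathlib

open MeasureTheory ProbabilityTheory Real Filter

/-- The cdf `Φ` of the standard normal distribution. -/
noncomputable def stdNormalCDF (x : ℝ) : ℝ := ProbabilityTheory.cdf (gaussianReal 0 1) x

lemma stdNormalCDF_mono : Monotone stdNormalCDF :=
  fun _ _ h => monotone_cdf _ h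

lemma stdNormalCDF_nonneg (x : ℝ) : 0 ≤ stdNormalCDF x := cdf_nonneg _ x

lemma gaussianReal_singleton_zero : (gaussianReal 0 1) {0} = 0 := by
  refine gaussianReal_absolutelyContinuous 0 one_ne_zero ?_
  simp

lemma stdNormalCDF_zero : stdNormalCDF 0 = 1 / 2 := by
  set μ := gaussianReal 0 1 with hμ
  have hf : Measurable fun x : ℝ => (-1 : ℝ) * x := (measurable_id.const_mul _)
  have hsym : μ.map (fun x : ℝ => (-1 : ℝ) * x) = μ := by
    rw [hμ, gaussianReal_map_const_mul (-1)]
    norm_num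
  have hIci : μ (Set.Iic 0) = μ (Set.Ici 0) := by
    conv_lhs => rw [← hsym]
    rw [Measure.map_apply hf measurableSet_Iic]
    congr 1
    ext x
    simp
  have hadd : μ (Set.Iic 0) + μ (Set.Ici 0) = 1 := by
    have h := measure_union_add_inter (μ := μ) (t := Set.Ici (0:ℝ)) (Set.Iic (0:ℝ)) measurableSet_Ici
    rw [Set.Iic_union_Ici, Set.Iic_inter_Ici, Set.Icc_self] at h
    have h0 : μ {(0:ℝ)} = 0 := gaussianReal_singleton_zero
    rw [h0, add_zero, measure_univ] at h
    exact h.symm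
  rw [← hIci] at hadd
  have hfin : μ (Set.Iic 0) ≠ ⊤ := measure_ne_top _ _
  have : (μ (Set.Iic 0)).toReal + (μ (Set.Iic 0)).toReal = 1 := by
    rw [← ENNReal.toReal_add hfin hfin, hadd, ENNReal.toReal_one]
  have hΦ : stdNormalCDF 0 = (μ (Set.Iic 0)).toReal := cdf_eq_real μ 0
  rw [hΦ]; linarith

lemma leftLim_stdNormalCDF_zero :
    Function.leftLim (⇑(ProbabilityTheory.cdf (gaussianReal 0 1))) 0 = stdNormalCDF 0 := by
  set μ := gaussianReal 0 1
  set f := ProbabilityTheory.cdf μ with hfdef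
  have h : f.measure {0} = 0 := by
    rw [measure_cdf]; exact gaussianReal_singleton_zero
  rw [f.measure_singleton 0] at h
  rw [ENNReal.ofReal_eq_zero] at h
  have h2 : Function.leftLim (⇑f) 0 ≤ f 0 := Monotone.leftLim_le f.mono le_rfl
  show Function.leftLim (⇑f) 0 = f 0
  linarith

lemma tendsto_sqrt_nat : Tendsto (fun n : ℕ => Real.sqrt n) atTop atTop := by
  refine tendsto_atTop_atTop_of_monotone
    (fun m n h => Real.sqrt_le_sqrt (by exact_mod_cast h)) (fun b => ⟨⌈b^2⌉₊, ?_⟩)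
  calc b ≤ Real.sqrt (b ^ 2) := by
        rw [Real.sqrt_sq_eq_abs]; exact le_abs_self b
    _ ≤ Real.sqrt (⌈b^2⌉₊ : ℝ) := Real.sqrt_le_sqrt (Nat.le_ceil _)

/-- For `a < 0`, `Φ(a/√n) → Φ(0) = 1/2`. -/
lemma tendsto_stdNormalCDF_div_sqrt {a : ℝ} (ha : a < 0) :
    Tendsto (fun n : ℕ => stdNormalCDF (a / Real.sqrt n)) atTop (nhds (1 / 2)) := by
  set f := ProbabilityTheory.cdf (gaussianReal 0 1) with hfdef
  have hseq0 : Tendsto (fun n : ℕ => a / Real.sqrt n) atTop (nhds 0) := by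
    simpa [div_eq_mul_inv] using (tendsto_sqrt_nat.inv_tendsto_atTop).const_mul a
  have hseq : Tendsto (fun n : ℕ => a / Real.sqrt n) atTop (nhdsWithin 0 (Set.Iio 0)) := by
    rw [tendsto_nhdsWithin_iff]
    refine ⟨hseq0, ?_⟩
    filter_upwards [eventually_ge_atTop 1] with n hn
    have hs : 0 < Real.sqrt n := Real.sqrt_pos.2 (by exact_mod_cast hn)
    exact Set.mem_Iio.2 (div_neg_of_neg_of_pos ha hs)
  have h := (f.mono.tendsto_leftLim 0).comp hseq
  rw [leftLim_stdNormalCDF_zero, stdNormalCDF_zero] at h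
  exact h

/-- **Theorem 5, under-mean case, `t/2 ≥ r - c`.** For `R ∈ (0,1/2)` and
`γ ≥ 2R`, the solutions `Yₙ` of `γ Φ(Yₙ) + (1-γ) Φ(√n Yₙ) = R` satisfy
`Φ(Yₙ) → R/γ` and `Φ(√n Yₙ) → 0`. -/
theorem limit_under_mean_above_cut
    (R γ : ℝ) (hR : R ∈ Set.Ioo (0 : ℝ) (1 / 2)) (hγ : γ ∈ Set.Ico (0 : ℝ) 1)
    (hcut : 2 * R ≤ γ) (Y : ℕ → ℝ)
    (hY : ∀ n : ℕ, 1 ≤ n →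
      γ * stdNormalCDF (Y n) + (1 - γ) * stdNormalCDF (Real.sqrt n * Y n) = R) :
    Tendsto (fun n : ℕ => stdNormalCDF (Y n)) atTop (nhds (R / γ)) ∧
      Tendsto (fun n : ℕ => stdNormalCDF (Real.sqrt n * Y n)) atTop (nhds 0) := by
  obtain ⟨hR0, hR2⟩ := hR
  obtain ⟨hγ0, hγ1⟩ := hγ
  have hγpos : 0 < γ := lt_of_lt_of_le (by linarith) hcut
  -- second limit
  have h2 : Tendsto (fun n : ℕ => stdNormalCDF (Real.sqrt n * Y n)) atTop (nhds 0) := by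
    rw [Metric.tendsto_atTop]
    intro ε hε
    -- pick a < 0 with Φ a < ε
    obtain ⟨a, haε, ha0⟩ :
        ∃ a : ℝ, stdNormalCDF a < ε ∧ a < 0 := by
      have h1 : ∀ᶠ x : ℝ in atBot, stdNormalCDF x < ε :=
        (tendsto_cdf_atBot (gaussianReal 0 1)).eventually (gt_mem_nhds hε)
      exact (h1.and (eventually_lt_atBot 0)).exists
    -- eventually γ Φ(a/√n) + (1-γ) ε > R
    have hlim : Tendsto (fun n : ℕ => γ * stdNormalCDF (a / Real.sqrt n) + (1 - γ) * ε)
        atTop (nhds (γ * (1 / 2) + (1 - γ) * ε)) :=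
      (((tendsto_stdNormalCDF_div_sqrt ha0).const_mul γ).add_const _)
    have hRlt : R < γ * (1 / 2) + (1 - γ) * ε := by nlinarith
    have hev : ∀ᶠ n : ℕ in atTop,
        R < γ * stdNormalCDF (a / Real.sqrt n) + (1 - γ) * ε :=
      hlim.eventually (eventually_gt_nhds hRlt)
    rw [eventually_atTop] at hev
    obtain ⟨N, hN⟩ := hev
    refine ⟨max N 1, fun n hn => ?_⟩
    have hn1 : 1 ≤ n := le_trans (le_max_right _ _) hn
    have hnN : N ≤ n := le_trans (le_max_left _ _) hn
    have hsn : 0 < Real.sqrt n := Real.sqrt_pos.2 (by exact_mod_cast hn1)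
    have hlt : stdNormalCDF (Real.sqrt n * Y n) < ε := by
      by_contra hge
      push_neg at hge
      -- then √n Yₙ ≥ a
      have h1 : a ≤ Real.sqrt n * Y n := by
        by_contra hlt'
        push_neg at hlt'
        exact absurd (le_trans hge (stdNormalCDF_mono hlt'.le)) (not_le.2 haε)
      have h2' : a / Real.sqrt n ≤ Y n := (div_le_iff₀' hsn).2 h1
      have h3 : stdNormalCDF (a / Real.sqrt n) ≤ stdNormalCDF (Y n) := stdNormalCDF_mono h2'
      have heq := hY n hn1
      have := hN n hnN
      nlinarith [stdNormalCDF_nonneg (Real.sqrt n * Y n)]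
    rw [Real.dist_eq, sub_zero, abs_of_nonneg (stdNormalCDF_nonneg _)]
    exact hlt
  refine ⟨?_, h2⟩
  have h1 : Tendsto (fun n : ℕ => (R - (1 - γ) * stdNormalCDF (Real.sqrt n * Y n)) / γ)
      atTop (nhds (R / γ)) := by
    have : Tendsto (fun n : ℕ => (R - (1 - γ) * stdNormalCDF (Real.sqrt n * Y n)) / γ)
        atTop (nhds ((R - (1 - γ) * 0) / γ)) :=
      ((tendsto_const_nhds.sub (h2.const_mul _)).div_const γ)
    simpa using this
  refine h1.congr' ?_
  filter_upwards [eventually_ge_atTop 1] with n hn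
  have heq := hY n hn
  field_simp
  linarith
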